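/- Let P be a cyclic normal Sylow p-subgroup of a finite group G. Then Ω_ρ(G) ≤ |P|·Ω_ρ(G/P) + |G/P|·Ω_ρ(P), with equality if and only if P is central in G. -/

import Mathlib

noncomputable def rho (G : Type*) [Group G] : ℕ := ∏ᶠ x : G, orderOf x

noncomputable def OmegaRho (G : Type*) [Group G] : ℕ :=
  ArithmeticFunction.cardFactors (rho G)

open Finset ArithmeticFunction Subgroup

private lemma cardFactors_finset_prod {α : Type*} (s : Finset α) (f : α → ℕ)
    (hf : ∀ a ∈ s, f a ≠ 0) :
    ArithmeticFunction.cardFactors (∏ a ∈ s, f a) =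
      ∑ a ∈ s, ArithmeticFunction.cardFactors (f a) := by
  classical
  induction s using Finset.induction_on with
  | empty => simp
  | @insert a s ha ih =>
    rw [Finset.prod_insert ha, Finset.sum_insert ha,
      ArithmeticFunction.cardFactors_mul (hf a (Finset.mem_insert_self a s))
        (Finset.prod_ne_zero_iff.mpr fun b hb => hf b (Finset.mem_insert_of_mem hb)),
      ih fun b hb => hf b (Finset.mem_insert_of_mem hb)]

private lemma omegaRho_eq (G : Type*) [Group G] [Fintype G] :
    OmegaRho G = ∑ x : G, ArithmeticFunction.cardFactors (orderOf x) := by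
  unfold OmegaRho rho
  rw [finprod_eq_prod_of_fintype]
  exact cardFactors_finset_prod _ _ fun a _ => (orderOf_pos a).ne'

section Aux

variable {G : Type*} [Group G] [Fintype G] {p : ℕ} [hp : Fact p.Prime]
  (N : Subgroup G) [hNn : N.Normal] [Fintype (G ⧸ N)] [Fintype N]

private lemma aux_main
    (hcyc : IsCyclic N) {n : ℕ} (hn : Nat.card N = p ^ n)
    (hind : ¬ p ∣ N.index)
    (hmem : ∀ x : G, (∃ k, orderOf x = p ^ k) → x ∈ N) :
    (∑ x : G, ArithmeticFunction.cardFactors (orderOf x)) ≤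
      Nat.card N * (∑ y : G ⧸ N, ArithmeticFunction.cardFactors (orderOf y)) +
        Nat.card (G ⧸ N) * (∑ u : N, ArithmeticFunction.cardFactors (orderOf u)) ∧
    ((∑ x : G, ArithmeticFunction.cardFactors (orderOf x)) =
      Nat.card N * (∑ y : G ⧸ N, ArithmeticFunction.cardFactors (orderOf y)) +
        Nat.card (G ⧸ N) * (∑ u : N, ArithmeticFunction.cardFactors (orderOf u)) ↔
      N ≤ Subgroup.center G) := by
  classical
  have hp' := hp.out
  set F : G → ℕ := fun x => (orderOf x).factorization p with hF
  set B : ℕ := ∑ u : N, ArithmeticFunction.cardFactors (orderOf u) with hB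
  set A : ℕ := ∑ y : G ⧸ N, ArithmeticFunction.cardFactors (orderOf y) with hA
  -- N is commutative
  have habel : ∀ a ∈ N, ∀ b ∈ N, a * b = b * a := by
    letI := hcyc.commGroup
    intro a ha b hb
    exact congrArg Subtype.val (mul_comm (⟨a, ha⟩ : N) (⟨b, hb⟩ : N))
  -- orders in the quotient are coprime to p
  have hqm : ∀ y : G ⧸ N, ¬ p ∣ orderOf y := by
    intro y hy
    exact hind (hy.trans ((orderOf_dvd_natCard y).trans (by rw [Subgroup.index_eq_card])))
  -- key order decomposition
  have horder : ∀ x : G, orderOf x =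
      orderOf (QuotientGroup.mk x : G ⧸ N) * p ^ ((orderOf x).factorization p) := by
    intro x
    set m := orderOf (QuotientGroup.mk x : G ⧸ N) with hm
    have hdvd : m ∣ orderOf x := orderOf_map_dvd (QuotientGroup.mk' N) x
    have hxm : x ^ m ∈ N := by
      rw [← QuotientGroup.eq_one_iff]
      have h : (QuotientGroup.mk (x ^ m) : G ⧸ N) = (QuotientGroup.mk x : G ⧸ N) ^ m :=
        (QuotientGroup.mk' N).map_pow x m
      rw [h, hm]
      exact pow_orderOf_eq_one _
    have h1 : orderOf (x ^ m) ∣ p ^ n := by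
      have := orderOf_dvd_natCard (⟨x ^ m, hxm⟩ : N)
      rwa [Subgroup.orderOf_mk, hn] at this
    have h2 : orderOf x ∣ m * p ^ n := by
      rw [orderOf_dvd_iff_pow_eq_one, pow_mul]
      exact orderOf_dvd_iff_pow_eq_one.mp h1
    obtain ⟨c, hc⟩ := hdvd
    have hm0 : m ≠ 0 := (orderOf_pos _).ne'
    have hcdvd : c ∣ p ^ n := by
      have h2' := h2
      rw [hc] at h2'
      exact (Nat.mul_dvd_mul_iff_left (Nat.pos_of_ne_zero hm0)).mp h2'
    obtain ⟨b, _, hcb⟩ := (Nat.dvd_prime_pow hp').mp hcdvd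
    have hpm : ¬ p ∣ m := hqm _
    have hfact : (orderOf x).factorization p = b := by
      rw [hc, hcb, Nat.factorization_mul hm0 (pow_ne_zero _ hp'.pos.ne')]
      simp [hp'.factorization_pow, Nat.factorization_eq_zero_of_not_dvd hpm]
    rw [hfact, hc, hcb]
  -- Ω decomposition
  have homega : ∀ x : G, ArithmeticFunction.cardFactors (orderOf x) =
      ArithmeticFunction.cardFactors (orderOf (QuotientGroup.mk x : G ⧸ N)) + F x := by
    intro x
    conv_lhs => rw [horder x]
    rw [ArithmeticFunction.cardFactors_mul (orderOf_pos _).ne' (pow_ne_zero _ hp'.pos.ne'),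
      ArithmeticFunction.cardFactors_apply_prime_pow hp']
  -- Ω for elements of N
  have homegaN : ∀ u : N, ArithmeticFunction.cardFactors (orderOf u) = F (u : G) := by
    intro u
    have hdvd : orderOf u ∣ p ^ n := by rw [← hn]; exact orderOf_dvd_natCard u
    obtain ⟨k, _, hk⟩ := (Nat.dvd_prime_pow hp').mp hdvd
    have hcoe : orderOf (u : G) = orderOf u := Subgroup.orderOf_coe u
    simp only [hF, hcoe, hk, ArithmeticFunction.cardFactors_apply_prime_pow hp',
      hp'.factorization_pow, Finsupp.single_eq_same]
  -- fiber sums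
  have fiber_sum : ∀ (f : G → ℕ) (y : G ⧸ N) (g : G), (QuotientGroup.mk g : G ⧸ N) = y →
      ∑ x ∈ univ.filter (fun x => (QuotientGroup.mk x : G ⧸ N) = y), f x
        = ∑ u : N, f (g * u) := by
    intro f y g hg
    refine (Finset.sum_bij' (fun (u : N) _ => g * (u : G))
      (fun x hx => (⟨g⁻¹ * x, ?_⟩ : N)) ?_ ?_ ?_ ?_ ?_).symm
    · rw [Finset.mem_filter] at hx
      exact QuotientGroup.eq.mp (hg.trans hx.2.symm)
    · intro u _
      rw [Finset.mem_filter]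
      refine ⟨Finset.mem_univ _, ?_⟩
      rw [← hg]
      exact (QuotientGroup.eq.mpr (by simpa using u.2)).symm
    · intro x _; exact Finset.mem_univ _
    · intro u _; ext; simp
    · intro x _; simp
    · intro u _; rfl
  -- every coset has a p'-element representative
  have hrep : ∀ y : G ⧸ N, ∃ g : G, (QuotientGroup.mk g : G ⧸ N) = y ∧ ¬ p ∣ orderOf g := by
    intro y
    obtain ⟨x, hx⟩ := QuotientGroup.mk_surjective (s := N) y
    set a := (orderOf x).factorization p with ha
    set m := orderOf (QuotientGroup.mk x : G ⧸ N) with hmdef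
    have hox : orderOf x = m * p ^ a := horder x
    have hpm : ¬ p ∣ m := hqm _
    rcases Nat.lt_or_ge 1 m with hm1 | hm1
    · have hcop : Nat.Coprime (p ^ a) m :=
        Nat.Coprime.pow_left a ((Nat.Prime.coprime_iff_not_dvd hp').mpr hpm)
      obtain ⟨b, -, hb⟩ := Nat.exists_mul_mod_eq_one_of_coprime hcop hm1
      refine ⟨x ^ (p ^ a * b), ?_, ?_⟩
      · have h : (QuotientGroup.mk (x ^ (p ^ a * b)) : G ⧸ N)
            = (QuotientGroup.mk x : G ⧸ N) ^ (p ^ a * b) :=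
          (QuotientGroup.mk' N).map_pow _ _
        rw [h, ← pow_mod_orderOf, ← hmdef, hb, pow_one, hx]
      · intro hpd
        have hdm : orderOf (x ^ (p ^ a * b)) ∣ m := by
          rw [orderOf_dvd_iff_pow_eq_one, ← pow_mul]
          apply orderOf_dvd_iff_pow_eq_one.mp
          rw [hox]
          exact ⟨b, by ring⟩
        exact hpm (hpd.trans hdm)
    · have hm0 : m = 1 := le_antisymm hm1 (orderOf_pos _)
      have hy1 : y = 1 := by
        rw [← hx]
        exact orderOf_eq_one_iff.mp (by rw [← hmdef, hm0])
      exact ⟨1, by simp [hy1], by simp [hp'.one_lt.ne']⟩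
  -- the key pointwise bound
  have hbound : ∀ g : G, ¬ p ∣ orderOf g → ∀ u : N,
      F (g * (u : G)) ≤ ArithmeticFunction.cardFactors (orderOf u) := by
    intro g hg u
    set k := orderOf (u : G) with hk
    have hk0 : k ≠ 0 := (orderOf_pos _).ne'
    have claim : ∀ j : ℕ, g⁻¹ ^ j * (g * (u : G)) ^ j ∈ N ∧
        (g⁻¹ ^ j * (g * (u : G)) ^ j) ^ k = 1 := by
      intro j
      induction j with
      | zero => simpa using N.one_mem
      | succ j ih =>
        have hw : g⁻¹ ^ (j + 1) * (g * (u : G)) ^ (j + 1)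
            = (g⁻¹ * (g⁻¹ ^ j * (g * (u : G)) ^ j) * g) * (u : G) := by
          rw [pow_succ' g⁻¹, pow_succ (g * (u : G))]
          group
        set w := g⁻¹ ^ j * (g * (u : G)) ^ j with hwdef
        have hw1 : g⁻¹ * w * g ∈ N := by
          have := hNn.conj_mem w ih.1 g⁻¹
          simpa using this
        have hwk : (g⁻¹ * w * g) ^ k = 1 := by
          have hconj : (g⁻¹ * w * g) ^ k = g⁻¹ * w ^ k * g := by
            have h1 : g⁻¹ * w * g = g⁻¹ * w * g⁻¹⁻¹ := by rw [inv_inv]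
            rw [h1, conj_pow, inv_inv]
          rw [hconj, ih.2, mul_one, inv_mul_cancel]
        have huk : ((u : G)) ^ k = 1 := by rw [hk, pow_orderOf_eq_one]
        refine ⟨?_, ?_⟩
        · rw [hw]; exact N.mul_mem hw1 u.2
        · rw [hw]
          have hcomm : Commute (g⁻¹ * w * g) (u : G) := habel _ hw1 _ u.2
          rw [hcomm.mul_pow, hwk, huk, mul_one]
    have hmk : (g * (u : G)) ^ (orderOf g * k) = 1 := by
      have h := (claim (orderOf g)).2
      have hg1 : g⁻¹ ^ (orderOf g) = 1 := by
        rw [inv_pow, pow_orderOf_eq_one, inv_one]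
      rw [hg1, one_mul] at h
      rw [pow_mul]
      exact h
    have hdvd : orderOf (g * (u : G)) ∣ orderOf g * k := orderOf_dvd_iff_pow_eq_one.mpr hmk
    have hle : (orderOf (g * (u : G))).factorization p ≤ (orderOf g * k).factorization p := by
      have := (Nat.factorization_le_iff_dvd (orderOf_pos _).ne'
        (mul_ne_zero (orderOf_pos g).ne' hk0)).mpr hdvd
      exact this p
    rw [homegaN u]
    refine hle.trans ?_
    rw [Nat.factorization_mul (orderOf_pos g).ne' hk0]
    simp only [Finsupp.coe_add, Pi.add_apply,
      Nat.factorization_eq_zero_of_not_dvd hg, zero_add, hF]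
    rw [hk, Subgroup.orderOf_coe]
  -- the sums split
  have hfibcard : ∀ y : G ⧸ N, ∀ g : G, (QuotientGroup.mk g : G ⧸ N) = y →
      ∑ x ∈ univ.filter (fun x => (QuotientGroup.mk x : G ⧸ N) = y),
        ArithmeticFunction.cardFactors (orderOf (QuotientGroup.mk x : G ⧸ N))
        = Nat.card N * ArithmeticFunction.cardFactors (orderOf y) := by
    intro y g hg
    rw [fiber_sum _ y g hg]
    have : ∀ u : N, (QuotientGroup.mk (g * (u : G)) : G ⧸ N) = y := by
      intro u
      rw [← hg]
      exact (QuotientGroup.eq.mpr (by simpa using u.2)).symm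
    calc ∑ u : N, ArithmeticFunction.cardFactors (orderOf (QuotientGroup.mk (g * (u : G)) : G ⧸ N))
        = ∑ _u : N, ArithmeticFunction.cardFactors (orderOf y) := by
          exact Finset.sum_congr rfl fun u _ => by rw [this u]
      _ = Nat.card N * ArithmeticFunction.cardFactors (orderOf y) := by
          rw [Finset.sum_const, Finset.card_univ, Nat.card_eq_fintype_card, smul_eq_mul]
  have hsplit : (∑ x : G, ArithmeticFunction.cardFactors (orderOf x)) =
      Nat.card N * A + ∑ y : G ⧸ N,
        ∑ x ∈ univ.filter (fun x => (QuotientGroup.mk x : G ⧸ N) = y), F x := by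
    calc ∑ x : G, ArithmeticFunction.cardFactors (orderOf x)
        = ∑ x : G, (ArithmeticFunction.cardFactors (orderOf (QuotientGroup.mk x : G ⧸ N)) + F x) :=
          Finset.sum_congr rfl fun x _ => homega x
      _ = (∑ x : G, ArithmeticFunction.cardFactors (orderOf (QuotientGroup.mk x : G ⧸ N)))
            + ∑ x : G, F x := Finset.sum_add_distrib
      _ = Nat.card N * A + ∑ y : G ⧸ N,
            ∑ x ∈ univ.filter (fun x => (QuotientGroup.mk x : G ⧸ N) = y), F x := by
          congr 1
          · rw [← Finset.sum_fiberwise_of_maps_to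
              (fun x _ => Finset.mem_univ (QuotientGroup.mk x : G ⧸ N))
              (fun x => ArithmeticFunction.cardFactors (orderOf (QuotientGroup.mk x : G ⧸ N)))]
            rw [hA, Finset.mul_sum]
            refine Finset.sum_congr rfl fun y _ => ?_
            obtain ⟨g, hg, _⟩ := hrep y
            exact hfibcard y g hg
          · rw [← Finset.sum_fiberwise_of_maps_to
              (fun x _ => Finset.mem_univ (QuotientGroup.mk x : G ⧸ N)) F]
  -- per-fiber bound
  have hSle : ∀ y : G ⧸ N,
      (∑ x ∈ univ.filter (fun x => (QuotientGroup.mk x : G ⧸ N) = y), F x) ≤ B := by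
    intro y
    obtain ⟨g, hg, hgp⟩ := hrep y
    rw [fiber_sum F y g hg, hB]
    exact Finset.sum_le_sum fun u _ => hbound g hgp u
  have hconstB : (∑ _y : G ⧸ N, B) = Nat.card (G ⧸ N) * B := by
    rw [Finset.sum_const, Finset.card_univ, Nat.card_eq_fintype_card, smul_eq_mul]
  constructor
  · rw [hsplit]
    have h := Finset.sum_le_sum fun (y : G ⧸ N) (_ : y ∈ univ) => hSle y
    rw [hconstB] at h
    exact Nat.add_le_add_left h _
  · constructor
    · intro heq
      rw [hsplit] at heq
      have h1 : (∑ y : G ⧸ N,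
          ∑ x ∈ univ.filter (fun x => (QuotientGroup.mk x : G ⧸ N) = y), F x)
          = ∑ _y : G ⧸ N, B := by
        rw [hconstB]
        omega
      have h2 := (Finset.sum_eq_sum_iff_of_le fun y _ => hSle y).mp h1
      intro v hv
      rw [Subgroup.mem_center_iff]
      intro g
      obtain ⟨g₀, hg₀, hg₀p⟩ := hrep (QuotientGroup.mk g)
      have hSy := h2 (QuotientGroup.mk g) (Finset.mem_univ _)
      rw [fiber_sum F _ g₀ hg₀, hB] at hSy
      have hpt := (Finset.sum_eq_sum_iff_of_le fun u _ => hbound g₀ hg₀p u).mp hSy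
      -- generator of N
      obtain ⟨u₀, hu₀⟩ := hcyc.exists_generator
      have hu₀ord : orderOf u₀ = p ^ n := by
        rw [orderOf_eq_card_of_forall_mem_zpowers hu₀, hn]
      have hz := hpt u₀ (Finset.mem_univ _)
      have hFn : F (g₀ * (u₀ : G)) = n := by
        rw [hz, homegaN u₀]
        have hcoe : orderOf (u₀ : G) = orderOf u₀ := Subgroup.orderOf_coe u₀
        simp [hF, hcoe, hu₀ord, hp'.factorization_pow]
      set z := g₀ * (u₀ : G) with hzdef
      have hz0 : orderOf z ≠ 0 := (orderOf_pos z).ne'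
      set m₁ := ordCompl[p] (orderOf z) with hm₁
      have hzord : orderOf z = p ^ n * m₁ := by
        rw [hm₁, ← hFn]
        exact (Nat.ordProj_mul_ordCompl_eq_self (orderOf z) p).symm
      have hm₁0 : m₁ ≠ 0 := Nat.ordCompl_pos p hz0 |>.ne'
      have hword : orderOf (z ^ m₁) = p ^ n := by
        have h1 : Nat.gcd (orderOf z) m₁ = m₁ := Nat.gcd_eq_right (Nat.ordCompl_dvd _ p)
        rw [orderOf_pow, h1, hzord, Nat.mul_div_cancel _ (Nat.pos_of_ne_zero hm₁0)]
      have hwN : z ^ m₁ ∈ N := hmem _ ⟨n, hword⟩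
      have hgen : ∀ v' : N, v' ∈ Subgroup.zpowers (⟨z ^ m₁, hwN⟩ : N) := by
        have htop : Subgroup.zpowers (⟨z ^ m₁, hwN⟩ : N) = ⊤ := by
          apply Subgroup.eq_top_of_card_eq
          rw [Nat.card_zpowers, Subgroup.orderOf_mk, hword, hn]
        intro v'
        rw [htop]
        trivial
      have hcz : ∀ v' ∈ N, Commute z v' := by
        intro v' hv'
        obtain ⟨j, hj⟩ := Subgroup.mem_zpowers_iff.mp (hgen ⟨v', hv'⟩)
        have hj' : (z ^ m₁) ^ j = v' := by
          have := congrArg Subtype.val hj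
          simpa using this
        rw [← hj']
        exact ((Commute.refl z).pow_right m₁).zpow_right j
      have hgN : g₀⁻¹ * g ∈ N := QuotientGroup.eq.mp hg₀
      have hcv : Commute g v := by
        have h3 : Commute z v := hcz v hv
        have h4 : Commute ((u₀ : G))⁻¹ v := habel _ (N.inv_mem u₀.2) v hv
        have h5 : Commute (g₀⁻¹ * g) v := habel _ hgN v hv
        have hgdecomp : g = z * (u₀ : G)⁻¹ * (g₀⁻¹ * g) := by
          rw [hzdef]; group
        rw [hgdecomp]
        exact (h3.mul_left h4).mul_left h5
      exact hcv.eq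
    · intro hc
      rw [hsplit]
      have hS : ∀ y : G ⧸ N,
          (∑ x ∈ univ.filter (fun x => (QuotientGroup.mk x : G ⧸ N) = y), F x) = B := by
        intro y
        obtain ⟨g, hg, hgp⟩ := hrep y
        rw [fiber_sum F y g hg, hB]
        refine Finset.sum_congr rfl fun u _ => ?_
        have hcom : Commute g (u : G) := (Subgroup.mem_center_iff.mp (hc u.2) g)
        have hudvd : orderOf (u : G) ∣ p ^ n := by
          rw [Subgroup.orderOf_coe, ← hn]
          exact orderOf_dvd_natCard u
        obtain ⟨k, _, hk⟩ := (Nat.dvd_prime_pow hp').mp hudvd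
        have hcop : Nat.Coprime (orderOf g) (orderOf (u : G)) := by
          rw [hk]
          exact Nat.Coprime.pow_right k
            (((Nat.Prime.coprime_iff_not_dvd hp').mpr hgp).symm)
        rw [homegaN u]
        simp only [hF]
        rw [hcom.orderOf_mul_eq_mul_orderOf_of_coprime hcop,
          Nat.factorization_mul (orderOf_pos g).ne' (orderOf_pos _).ne',
          Finsupp.coe_add, Pi.add_apply,
          Nat.factorization_eq_zero_of_not_dvd hgp, zero_add]
      rw [Finset.sum_congr rfl fun y _ => hS y, hconstB]

end Aux

theorem omegaRho_sylow_le (G : Type*) [Group G] [Finite G] (p : ℕ) [Fact p.Prime]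
    (P : Sylow p G) [(P : Subgroup G).Normal] (hcyc : IsCyclic (P : Subgroup G)) :
    OmegaRho G ≤ Nat.card (P : Subgroup G) * OmegaRho (G ⧸ (P : Subgroup G)) +
      Nat.card (G ⧸ (P : Subgroup G)) * OmegaRho (P : Subgroup G) ∧
    (OmegaRho G = Nat.card (P : Subgroup G) * OmegaRho (G ⧸ (P : Subgroup G)) +
      Nat.card (G ⧸ (P : Subgroup G)) * OmegaRho (P : Subgroup G) ↔
      (P : Subgroup G) ≤ Subgroup.center G) := by
  classical
  haveI : Fintype G := Fintype.ofFinite G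
  haveI : Fintype (G ⧸ (P : Subgroup G)) := Fintype.ofFinite _
  haveI : Fintype (P : Subgroup G) := Fintype.ofFinite _
  obtain ⟨n, hn⟩ := IsPGroup.iff_card.mp P.isPGroup'
  have hind : ¬ p ∣ (P : Subgroup G).index := by
    haveI : (P : Subgroup G).FiniteIndex := ⟨Subgroup.index_ne_zero_of_finite⟩
    exact P.not_dvd_index
  have hmem : ∀ x : G, (∃ k, orderOf x = p ^ k) → x ∈ (P : Subgroup G) := by
    intro x ⟨k, hk⟩
    have hpg : IsPGroup p (Subgroup.zpowers x) := by
      apply IsPGroup.iff_card.mpr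
      exact ⟨k, by rw [Nat.card_zpowers, hk]⟩
    obtain ⟨Q, hQ⟩ := hpg.exists_le_sylow
    haveI := Sylow.unique_of_normal P (by assumption)
    have : Q = P := Subsingleton.elim Q P
    rw [this] at hQ
    exact hQ (Subgroup.mem_zpowers x)
  rw [omegaRho_eq G, omegaRho_eq (G ⧸ (P : Subgroup G)), omegaRho_eq (P : Subgroup G)]
  exact aux_main (P : Subgroup G) hcyc hn hind hmem
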